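/- Let F ∈ so(1,3) and w ∈ ℝ⁴, and suppose I₂ := -(1/2) F̃_{cd} F^{cd} = 0, where F̃_{cd} = (1/2)ε_{abcd}F^{ab}. Define I₃(F,w) := η(F̃w, F̃w) = F̃_{ab}w^b F̃^a{}_c w^c. Then I₃ is invariant under translations: for every a ∈ ℝ⁴, I₃(F, w - Fa) = I₃(F, w). -/

import Mathlib

open Matrix

/-- The Minkowski metric η = diag(-1,1,1,1). -/
noncomputable def eta : Matrix (Fin 4) (Fin 4) ℝ := Matrix.diagonal ![-1, 1, 1, 1]

/-- The Levi-Civita symbol on four indices, with `lc 0 1 2 3 = 1`. -/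
noncomputable def lc (a b c d : Fin 4) : ℝ :=
  (((a.val : ℝ) - b.val) * ((a.val : ℝ) - c.val) * ((a.val : ℝ) - d.val) *
    ((b.val : ℝ) - c.val) * ((b.val : ℝ) - d.val) * ((c.val : ℝ) - d.val)) / 12

/-- Hodge dual with both indices down: F̃_{cd} = (1/2) ε_{abcd} F^{ab}, where F is given
with mixed indices (F^a_b) and F^{ab} = (F η)^{ab}. -/
noncomputable def dual (F : Matrix (Fin 4) (Fin 4) ℝ) : Matrix (Fin 4) (Fin 4) ℝ :=
  fun c d => (1/2) * ∑ a, ∑ b, lc a b c d * (F * eta) a b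

/-- The invariant I₂ = -(1/2) F̃_{cd} F^{cd}. -/
noncomputable def I2inv (F : Matrix (Fin 4) (Fin 4) ℝ) : ℝ :=
  -(1/2) * ∑ c, ∑ d, dual F c d * (F * eta) c d

/-- The invariant I₃(F,w) = F̃_{ab} w^b F̃^a{}_c w^c = η(F̃w, F̃w). -/
noncomputable def I3inv (F : Matrix (Fin 4) (Fin 4) ℝ) (w : Fin 4 → ℝ) : ℝ :=
  dotProduct ((dual F).mulVec w) ((eta * dual F).mulVec w)

/-!
For antisymmetric `F^{ab}` one has `F̃_{cd} F^{ce} = ¼ (F^{ab} F̃_{ab}) δ^e_d`, which for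
`F ∈ so(1,3)` reads `F̃ F = (I₂ / 2) η` in matrix form. Hence when `I₂ = 0` the dual `F̃`
annihilates the image of `F`, so `F̃ (w - F a) = F̃ w` and `I₃` cannot change.
-/

noncomputable def hodgeDual (A : Matrix (Fin 4) (Fin 4) ℝ) : Matrix (Fin 4) (Fin 4) ℝ :=
  fun c d => (1/2) * ∑ a, ∑ b, lc a b c d * A a b

theorem dual_eq_hodgeDual (F : Matrix (Fin 4) (Fin 4) ℝ) : dual F = hodgeDual (F * eta) := rfl

theorem lc_swap_last (a b c d : Fin 4) : lc a b d c = -lc a b c d := by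
  unfold lc; ring

theorem hodgeDual_transpose (A : Matrix (Fin 4) (Fin 4) ℝ) : (hodgeDual A)ᵀ = -hodgeDual A := by
  ext c d
  rw [transpose_apply, neg_apply]
  simp only [hodgeDual, lc_swap_last _ _ c d, neg_mul, Finset.sum_neg_distrib, mul_neg]

theorem hodgeDual_eq_of_transpose_eq_neg {A : Matrix (Fin 4) (Fin 4) ℝ} (hA : Aᵀ = -A) :
    hodgeDual A = !![0, A 2 3, -A 1 3, A 1 2; -A 2 3, 0, A 0 3, -A 0 2;
      A 1 3, -A 0 3, 0, A 0 1; -A 1 2, A 0 2, -A 0 1, 0] := by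
  have h : ∀ i j, A j i = -A i j := fun i j => by simpa using congrFun (congrFun hA i) j
  ext c d
  fin_cases c <;> fin_cases d <;>
    simp [hodgeDual, lc, Fin.sum_univ_four, h 1 0, h 2 0, h 3 0, h 2 1, h 3 1, h 3 2] <;> ring

theorem hodgeDual_transpose_mul {A : Matrix (Fin 4) (Fin 4) ℝ} (hA : Aᵀ = -A) :
    (hodgeDual A)ᵀ * A = ((1/4) * ∑ a, ∑ b, A a b * hodgeDual A a b) • 1 := by
  have h : ∀ i j, A j i = -A i j := fun i j => by simpa using congrFun (congrFun hA i) j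
  have hdiag : ∀ i, A i i = 0 := fun i => by linarith [h i i]
  rw [hodgeDual_eq_of_transpose_eq_neg hA]
  ext d e
  fin_cases d <;> fin_cases e <;>
    simp [mul_apply, Fin.sum_univ_four, h 1 0, h 2 0, h 3 0, h 2 1, h 3 1, h 3 2, hdiag] <;> ring

theorem eta_mul_eta : eta * eta = 1 := by
  rw [eta, diagonal_mul_diagonal, ← diagonal_one, diagonal_eq_diagonal_iff]
  intro i; fin_cases i <;> simp

theorem transpose_mul_eta_eq_neg {F : Matrix (Fin 4) (Fin 4) ℝ} (hF : Fᵀ * eta + eta * F = 0) :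
    (F * eta)ᵀ = -(F * eta) := by
  have hF' : Fᵀ * eta = -(eta * F) := eq_neg_of_add_eq_zero_left hF
  calc (F * eta)ᵀ = eta * (Fᵀ * eta) * eta := by
        rw [transpose_mul, eta, diagonal_transpose, ← eta, mul_assoc, mul_assoc, eta_mul_eta,
          mul_one]
    _ = -(F * eta) := by rw [hF', mul_neg, neg_mul, ← mul_assoc, eta_mul_eta, one_mul]

theorem dual_mul_self {F : Matrix (Fin 4) (Fin 4) ℝ} (hF : Fᵀ * eta + eta * F = 0) :
    dual F * F = (I2inv F / 2) • eta := by
  have hI2 : (1/4) * ∑ a, ∑ b, (F * eta) a b * hodgeDual (F * eta) a b = -(I2inv F / 2) := by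
    simp only [I2inv, dual_eq_hodgeDual, hodgeDual, mul_comm ((F * eta) _ _)]; ring
  calc dual F * F = -((hodgeDual (F * eta))ᵀ * (F * eta)) * eta := by
        simp only [dual_eq_hodgeDual, hodgeDual_transpose, neg_mul, neg_neg, mul_assoc,
          eta_mul_eta, mul_one]
    _ = (I2inv F / 2) • eta := by
        rw [hodgeDual_transpose_mul (transpose_mul_eta_eq_neg hF)]
        simp only [hI2, neg_smul, neg_neg, smul_mul, one_mul]

/-- If F ∈ so(1,3) with I₂ = 0, then I₃ is invariant under translations
w ↦ w - F a. -/
theorem stmt13 (F : Matrix (Fin 4) (Fin 4) ℝ) (w : Fin 4 → ℝ)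
    (hF : Fᵀ * eta + eta * F = 0) (hI2 : I2inv F = 0) :
    ∀ a : Fin 4 → ℝ, I3inv F (w - F.mulVec a) = I3inv F w := by
  intro a
  have hnull : dual F * F = 0 := by rw [dual_mul_self hF, hI2, zero_div, zero_smul]
  have hdual : (dual F).mulVec (w - F.mulVec a) = (dual F).mulVec w := by
    rw [mulVec_sub, mulVec_mulVec, hnull, zero_mulVec, sub_zero]
  simp only [I3inv, ← mulVec_mulVec, hdual]
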